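/- Let f : [0, z̄] → ℝ and constants t_ℓ define, for z_ℓ ∈ (0, z̄), the system: (1) v(n(z_ℓ), s, z_ℓ) − t_ℓ = 0 and (2) t_ℓ − c(s, z_ℓ) = 0, with v(x,s,z) = A s^a x z, c(s,z) = β s²/z, n(z) = k z^q, A,k,β > 0, 0 ≤ a < 1, q ≥ 0. Then for each z_ℓ > 0 the pair (s_ℓ, t_ℓ) = ( ((Ak/β) z_ℓ^{q+2})^{1/(2−a)}, β s_ℓ²/z_ℓ ) is the unique solution with s > 0, and the map z_ℓ ↦ t_ℓ(z_ℓ) = β^{−a/(2−a)} (Ak)^{2/(2−a)} z_ℓ^{(2q+2+a)/(2−a)} is strictly increasing and continuous on (0, z̄). -/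

import Mathlib

/-!
Summing the two entry conditions eliminates `t` and leaves the balance
`A k s^a z^(q+1) = β s² / z`, i.e. `s^(2-a) = (A k / β) z^(q+2)`; since `2 - a > 0` this has the
unique positive root `s_ℓ`, and `t_ℓ = β s_ℓ² / z` is then a positive multiple of the power
`z^((2q+2+a)/(2-a))`, whose exponent is positive.
-/

open Real Set

lemma entry_balance_iff {A k β q a s z : ℝ} (hβ : β ≠ 0) (hs : 0 < s) (hz : 0 < z) :
    A * s ^ a * (k * z ^ q) * z = β * s ^ 2 / z ↔ s ^ (2 - a) = A * k / β * z ^ (q + 2) := by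
  have hsq : s ^ 2 = s ^ (2 - a) * s ^ a := by
    rw [← rpow_add hs, sub_add_cancel, rpow_two]
  have hzq : z ^ (q + 2) = z ^ q * z ^ 2 := by rw [rpow_add hz, rpow_two]
  rw [hsq, hzq]
  field_simp
  exact eq_comm

lemma eq_rpow_one_div_iff {x s p : ℝ} (hx : 0 ≤ x) (hs : 0 ≤ s) (hp : p ≠ 0) :
    s = x ^ (1 / p) ↔ s ^ p = x := by
  rw [eq_comm, one_div, rpow_inv_eq hx hs hp, eq_comm]

lemma entry_threshold_eq_rpow {c β q a z : ℝ} (hc : 0 < c) (hβ : 0 < β) (ha : a ≠ 2)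
    (hz : 0 < z) :
    β * ((c / β * z ^ (q + 2)) ^ (1 / (2 - a))) ^ 2 / z =
      β ^ (-(a / (2 - a))) * c ^ (2 / (2 - a)) * z ^ ((2 * q + 2 + a) / (2 - a)) := by
  have hp : 2 - a ≠ 0 := sub_ne_zero.mpr ha.symm
  rw [← rpow_two, ← rpow_mul (by positivity), mul_rpow (by positivity) (by positivity),
    div_rpow hc.le hβ.le, ← rpow_mul hz.le]
  have hβe : -(a / (2 - a)) = 1 - 1 / (2 - a) * 2 := by field_simp; ring
  have hze : (q + 2) * (1 / (2 - a) * 2) = (2 * q + 2 + a) / (2 - a) + 1 := by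
    field_simp; ring
  have hce : 1 / (2 - a) * 2 = 2 / (2 - a) := by field_simp
  rw [hβe, hze, hce, rpow_sub hβ, rpow_add hz, rpow_one, rpow_one]
  field_simp

lemma strictMonoOn_const_mul_rpow {C r : ℝ} (hC : 0 < C) (hr : 0 < r) :
    StrictMonoOn (fun z : ℝ => C * z ^ r) (Ioi 0) :=
  fun _ hx _ _ hxy => mul_lt_mul_of_pos_left (rpow_lt_rpow (le_of_lt hx) hxy hr) hC

lemma continuous_const_mul_rpow (C : ℝ) {r : ℝ} (hr : 0 ≤ r) :
    Continuous (fun z : ℝ => C * z ^ r) :=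
  continuous_const.mul (continuous_id.rpow_const fun _ => Or.inr hr)

theorem entry_bounds_bijection_general (A k β q a zbar : ℝ) (hA : 0 < A) (hk : 0 < k) (hβ : 0 < β)
    (hq : 0 ≤ q) (ha0 : 0 ≤ a) (ha1 : a < 1) :
    let sℓ : ℝ → ℝ := fun z => ((A * k / β) * z ^ (q + 2)) ^ (1 / (2 - a))
    let tℓ : ℝ → ℝ := fun z => β * (sℓ z) ^ 2 / z
    (∀ zℓ ∈ Set.Ioo (0 : ℝ) zbar,
      (0 < sℓ zℓ ∧
        A * (sℓ zℓ) ^ a * (k * zℓ ^ q) * zℓ - tℓ zℓ = 0 ∧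
        tℓ zℓ - β * (sℓ zℓ) ^ 2 / zℓ = 0) ∧
      ∀ s t : ℝ, 0 < s → A * s ^ a * (k * zℓ ^ q) * zℓ - t = 0 → t - β * s ^ 2 / zℓ = 0 →
        s = sℓ zℓ ∧ t = tℓ zℓ) ∧
    (∀ zℓ ∈ Set.Ioo (0 : ℝ) zbar,
      tℓ zℓ = β ^ (-(a / (2 - a))) * (A * k) ^ (2 / (2 - a)) * zℓ ^ ((2 * q + 2 + a) / (2 - a))) ∧
    StrictMonoOn tℓ (Set.Ioo 0 zbar) ∧ ContinuousOn tℓ (Set.Ioo 0 zbar) := by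
  intro sℓ tℓ
  have hp : 2 - a ≠ 0 := by linarith
  have hX : ∀ z, 0 < z → 0 ≤ A * k / β * z ^ (q + 2) := fun z hz => by positivity
  have hsℓ : ∀ z, 0 < z → 0 < sℓ z := fun z hz => by positivity
  have hpow : EqOn tℓ (fun z => β ^ (-(a / (2 - a))) * (A * k) ^ (2 / (2 - a)) *
      z ^ ((2 * q + 2 + a) / (2 - a))) (Ioo 0 zbar) :=
    fun z hz => entry_threshold_eq_rpow (by positivity) hβ (by linarith) hz.1
  have hC : 0 < β ^ (-(a / (2 - a))) * (A * k) ^ (2 / (2 - a)) := by positivity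
  have he : 0 < (2 * q + 2 + a) / (2 - a) := div_pos (by linarith) (by linarith)
  refine ⟨fun z hz => ⟨⟨hsℓ z hz.1, ?_, sub_self _⟩, fun s t hs h₁ h₂ => ?_⟩, hpow,
    ((strictMonoOn_const_mul_rpow hC he).mono Ioo_subset_Ioi_self).congr hpow.symm,
    (continuous_const_mul_rpow _ he.le).continuousOn.congr hpow⟩
  · exact sub_eq_zero.mpr <| (entry_balance_iff hβ.ne' (hsℓ z hz.1) hz.1).mpr <|
      (eq_rpow_one_div_iff (hX z hz.1) (hsℓ z hz.1).le hp).mp rfl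
  · rw [sub_eq_zero] at h₁ h₂
    have hs_eq : s = sℓ z :=
      (eq_rpow_one_div_iff (hX z hz.1) hs.le hp).mpr <|
        (entry_balance_iff hβ.ne' hs hz.1).mp (h₁.trans h₂)
    exact ⟨hs_eq, h₂.trans (by rw [hs_eq])⟩

/-- The market-entry conditions determine a unique pair `(s_ℓ, t_ℓ)` for each `z_ℓ ∈ (0, z̄)`,
with closed forms, and the map `z_ℓ ↦ t_ℓ(z_ℓ)` has the stated power form and is strictly
increasing and continuous on `(0, z̄)`. -/
theorem entry_bounds_bijection (A k β q a zbar : ℝ) (hA : 0 < A) (hk : 0 < k) (hβ : 0 < β)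
    (hq : 0 ≤ q) (ha0 : 0 ≤ a) (ha1 : a < 1) (hzbar : 0 < zbar) :
    let sℓ : ℝ → ℝ := fun z => ((A * k / β) * z ^ (q + 2)) ^ (1 / (2 - a))
    let tℓ : ℝ → ℝ := fun z => β * (sℓ z) ^ 2 / z
    (∀ zℓ ∈ Set.Ioo (0 : ℝ) zbar,
      (0 < sℓ zℓ ∧
        A * (sℓ zℓ) ^ a * (k * zℓ ^ q) * zℓ - tℓ zℓ = 0 ∧
        tℓ zℓ - β * (sℓ zℓ) ^ 2 / zℓ = 0) ∧
      ∀ s t : ℝ, 0 < s → A * s ^ a * (k * zℓ ^ q) * zℓ - t = 0 → t - β * s ^ 2 / zℓ = 0 →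
        s = sℓ zℓ ∧ t = tℓ zℓ) ∧
    (∀ zℓ ∈ Set.Ioo (0 : ℝ) zbar,
      tℓ zℓ = β ^ (-(a / (2 - a))) * (A * k) ^ (2 / (2 - a)) * zℓ ^ ((2 * q + 2 + a) / (2 - a))) ∧
    StrictMonoOn tℓ (Set.Ioo 0 zbar) ∧ ContinuousOn tℓ (Set.Ioo 0 zbar) :=
  entry_bounds_bijection_general A k β q a zbar hA hk hβ hq ha0 ha1
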